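/- arXiv:2504.12748 — 3 statements merged into one kernel-verified Lean document; each statement's English description precedes it below -/
import Mathlib

section
/- Pareto reduction is compatible with pointwise combination (Lemma 2 of the paper): let ∘ be a binary operation on V_A that is monotone with respect to ⪯_A in each argument, let ⊗_D be monotone with respect to ⪯_D, and define ψ((x,y),(x',y')) = (x ⊗_D x', y ∘ y') on V_D × V_A. Then for any finite subsets X, X' ⊆ V_D × V_A, min_⊑(ψ(X, X')) = min_⊑(ψ(min_⊑(X), X')), where ψ(X,X') = {ψ(p,p') | p ∈ X, p' ∈ X'} and min_⊑ denotes the set of Pareto optimal (non-dominated) elements. -/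
/-- Pareto dominance on `V_D × V_A`: `(s₁,t₁) ⊑ (s₂,t₂)` iff `s₁ ⪯_D s₂` and
`t₂ ⪯_A t₁`. -/
def paretoDom {VD VA : Type*} [LinearOrder VD] [LinearOrder VA]
    (p q : VD × VA) : Prop :=
  p.1 ≤ q.1 ∧ q.2 ≤ p.2

/-- The set of Pareto optimal (non-dominated) elements of `S`. -/
def paretoMin {VD VA : Type*} [LinearOrder VD] [LinearOrder VA]
    (S : Set (VD × VA)) : Set (VD × VA) :=
  {x ∈ S | ∀ x' ∈ S, paretoDom x' x → x' = x}

lemma paretoDom_refl {VD VA : Type*} [LinearOrder VD] [LinearOrder VA]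
    (p : VD × VA) : paretoDom p p := ⟨le_refl _, le_refl _⟩

lemma paretoDom_trans {VD VA : Type*} [LinearOrder VD] [LinearOrder VA]
    {p q r : VD × VA} (h1 : paretoDom p q) (h2 : paretoDom q r) :
    paretoDom p r := ⟨h1.1.trans h2.1, h2.2.trans h1.2⟩

lemma paretoDom_antisymm {VD VA : Type*} [LinearOrder VD] [LinearOrder VA]
    {p q : VD × VA} (h1 : paretoDom p q) (h2 : paretoDom q p) : p = q :=
  Prod.ext (le_antisymm h1.1 h2.1) (le_antisymm h2.2 h1.2)

lemma exists_paretoMin_dom {VD VA : Type*} [LinearOrder VD] [LinearOrder VA]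
    {X : Set (VD × VA)} (hX : X.Finite) {x : VD × VA} (hx : x ∈ X) :
    ∃ m ∈ paretoMin X, paretoDom m x := by
  set S : Set (VD × VA) := {y ∈ X | paretoDom y x} with hS
  have hSfin : S.Finite := hX.subset (fun y hy => hy.1)
  have hSne : S.Nonempty := ⟨x, hx, paretoDom_refl x⟩
  obtain ⟨m, hmS, hmin⟩ : ∃ m ∈ S, ∀ y ∈ S,
      (fun p : VD × VA => (p.1, OrderDual.toDual p.2)) y ≤
        (fun p : VD × VA => (p.1, OrderDual.toDual p.2)) m →
      (fun p : VD × VA => (p.1, OrderDual.toDual p.2)) m =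
        (fun p : VD × VA => (p.1, OrderDual.toDual p.2)) y := by
    obtain ⟨m, hmS, hmin⟩ := hSfin.exists_minimalFor
      (fun p : VD × VA => (p.1, OrderDual.toDual p.2)) S hSne
    exact ⟨m, hmS, fun y hy h => le_antisymm (hmin hy h) h⟩
  refine ⟨m, ⟨hmS.1, ?_⟩, hmS.2⟩
  intro y hy hdom
  have hyS : y ∈ S := ⟨hy, paretoDom_trans hdom hmS.2⟩
  have := hmin y hyS ⟨hdom.1, hdom.2⟩
  exact Prod.ext (congrArg Prod.fst this).symm (congrArg Prod.snd this).symm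

/-- Lemma 2 of the paper: Pareto reduction is compatible with
pointwise combination `ψ((x,y),(x',y')) = (x ⊗_D x', y ∘ y')`, where `⊗_D` and
`∘` are monotone in each argument:
`min_⊑(ψ(X, X')) = min_⊑(ψ(min_⊑(X), X'))`. -/
theorem paretoMin_psi_left
    {VD VA : Type*} [LinearOrder VD] [LinearOrder VA]
    (otimesD : VD → VD → VD) (circ : VA → VA → VA)
    (hD₁ : ∀ x y z : VD, x ≤ y → otimesD x z ≤ otimesD y z)
    (hD₂ : ∀ x y z : VD, x ≤ y → otimesD z x ≤ otimesD z y)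
    (hA₁ : ∀ x y z : VA, x ≤ y → circ x z ≤ circ y z)
    (hA₂ : ∀ x y z : VA, x ≤ y → circ z x ≤ circ z y)
    (X X' : Set (VD × VA)) (hX : X.Finite) (hX' : X'.Finite) :
    paretoMin (Set.image2 (fun p q => (otimesD p.1 q.1, circ p.2 q.2)) X X') =
      paretoMin (Set.image2 (fun p q => (otimesD p.1 q.1, circ p.2 q.2))
        (paretoMin X) X') := by
  set ψ : VD × VA → VD × VA → VD × VA :=
    fun p q => (otimesD p.1 q.1, circ p.2 q.2) with hψ
  have hmono : ∀ p p' q : VD × VA, paretoDom p p' → paretoDom (ψ p q) (ψ p' q) := by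
    intro p p' q h
    exact ⟨hD₁ _ _ _ h.1, hA₁ _ _ _ h.2⟩
  have hsub : Set.image2 ψ (paretoMin X) X' ⊆ Set.image2 ψ X X' :=
    Set.image2_subset_right (fun y hy => hy.1)
  ext z
  constructor
  · rintro ⟨hz, hminz⟩
    obtain ⟨p, hp, q, hq, hpq⟩ := hz
    obtain ⟨m, hm, hdom⟩ := exists_paretoMin_dom hX hp
    have hmem : ψ m q ∈ Set.image2 ψ X X' := ⟨m, hm.1, q, hq, rfl⟩
    have heq : ψ m q = z := hminz _ hmem (hpq ▸ hmono m p q hdom)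
    refine ⟨⟨m, hm, q, hq, heq⟩, ?_⟩
    intro w hw hdw
    exact hminz w (hsub hw) hdw
  · rintro ⟨hz, hminz⟩
    refine ⟨hsub hz, ?_⟩
    intro w hw hdw
    obtain ⟨p, hp, q, hq, hpq⟩ := hw
    obtain ⟨m, hm, hdom⟩ := exists_paretoMin_dom hX hp
    have hmem : ψ m q ∈ Set.image2 ψ (paretoMin X) X' := ⟨m, hm, q, hq, rfl⟩
    have hdmz : paretoDom (ψ m q) z :=
      paretoDom_trans (hpq ▸ hmono m p q hdom) hdw
    have heq : ψ m q = z := hminz _ hmem hdmz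
    have : paretoDom z w := heq ▸ hpq ▸ hmono m p q hdom
    exact paretoDom_antisymm hdw this
end

section
/- OR-decomposition of optimal attack cost (Lemma 1, OR case): let T be a tree-shaped AADT whose attacker-held root is an OR-gate with two children spanning subtrees T₁ and T₂ with disjoint sets of basic defense steps D₁, D₂ and disjoint sets of basic attack steps A₁, A₂. For defense vectors δ₁ ∈ 𝔹^{D₁}, δ₂ ∈ 𝔹^{D₂}, the optimal attack response value satisfies β̂_A(ρ(δ₁,δ₂)) = β̂_A(ρ₁(δ₁)) ⊕_A β̂_A(ρ₂(δ₂)), where ⊕_A takes the minimum with respect to ⪯_A, ρ, ρ₁, ρ₂ are the optimal attack responses of T, T₁, T₂ respectively, and β̂_A(×) = 1_⊕ when no successful attack exists. -/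
/-- Lemma 1, OR case: for a tree-shaped AADT whose attacker-held
root is an OR-gate with subtrees `T₁`, `T₂` having disjoint BDS/BAS sets, the
optimal attack response value against `(δ₁, δ₂)` is the `⊕_A` (minimum) of the
optimal attack response values of the subtrees:
`β̂_A(ρ(δ₁,δ₂)) = β̂_A(ρ₁(δ₁)) ⊕_A β̂_A(ρ₂(δ₂))`.

The attacker semiring attribute domain is `(VA, ⊗_A, 1_⊕, 1_⊗, ⪯_A)`; attacks
on `T` are pairs `(α₁, α₂)` succeeding iff `α₁` succeeds on `T₁` or `α₂`
succeeds on `T₂`, with `β̂_A(α₁,α₂) = β̂_A(α₁) ⊗_A β̂_A(α₂)`; `ρ(δ)` minimizes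
`β̂_A` over successful attacks, with value `1_⊕` if none exists. -/
theorem or_decomposition
    {VA : Type*} [LinearOrder VA]
    (otimes : VA → VA → VA) (topA unitA : VA)
    (hcomm : ∀ x y, otimes x y = otimes y x)
    (hassoc : ∀ x y z, otimes (otimes x y) z = otimes x (otimes y z))
    (hmono : ∀ x y z, x ≤ y → otimes x z ≤ otimes y z)
    (hunit : ∀ x, otimes x unitA = x)
    (hunitmin : ∀ x, unitA ≤ x)
    (htop : ∀ x, x ≤ topA)
    {D1 D2 A1 A2 : Type*}
    (f1 : (D1 → Bool) → (A1 → Bool) → Prop)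
    (f2 : (D2 → Bool) → (A2 → Bool) → Prop)
    (bh1 : (A1 → Bool) → VA) (bh2 : (A2 → Bool) → VA)
    (hbh1 : bh1 (fun _ => false) = unitA)
    (hbh2 : bh2 (fun _ => false) = unitA)
    (δ1 : D1 → Bool) (δ2 : D2 → Bool)
    (v1 v2 v : VA)
    -- `v1 = β̂_A(ρ₁(δ₁))`
    (hv1 : (∃ α, f1 δ1 α ∧ bh1 α = v1 ∧ ∀ α', f1 δ1 α' → v1 ≤ bh1 α') ∨
      ((∀ α, ¬ f1 δ1 α) ∧ v1 = topA))
    -- `v2 = β̂_A(ρ₂(δ₂))`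
    (hv2 : (∃ α, f2 δ2 α ∧ bh2 α = v2 ∧ ∀ α', f2 δ2 α' → v2 ≤ bh2 α') ∨
      ((∀ α, ¬ f2 δ2 α) ∧ v2 = topA))
    -- `v = β̂_A(ρ(δ₁,δ₂))`, the root being an OR-gate
    (hv : (∃ α : (A1 → Bool) × (A2 → Bool), (f1 δ1 α.1 ∨ f2 δ2 α.2) ∧
        otimes (bh1 α.1) (bh2 α.2) = v ∧
        ∀ α' : (A1 → Bool) × (A2 → Bool), (f1 δ1 α'.1 ∨ f2 δ2 α'.2) →
          v ≤ otimes (bh1 α'.1) (bh2 α'.2)) ∨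
      ((∀ (α1 : A1 → Bool) (α2 : A2 → Bool), ¬ (f1 δ1 α1 ∨ f2 δ2 α2)) ∧
        v = topA)) :
    v = min v1 v2 := by
  rcases hv with ⟨α, hsucc, hval, hopt⟩ | ⟨hnone, hvt⟩
  · -- v ≤ v1
    have hle1 : v ≤ v1 := by
      rcases hv1 with ⟨β, hβ, hβv, _⟩ | ⟨_, h⟩
      · have := hopt (β, fun _ => false) (Or.inl hβ)
        simpa [hbh2, hunit, hβv] using this
      · rw [h]; exact htop v
    have hle2 : v ≤ v2 := by
      rcases hv2 with ⟨β, hβ, hβv, _⟩ | ⟨_, h⟩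
      · have := hopt ((fun _ => false), β) (Or.inr hβ)
        rw [hbh1, hcomm, hunit, hβv] at this
        exact this
      · rw [h]; exact htop v
    have hge : min v1 v2 ≤ v := by
      rcases hsucc with h1 | h2
      · have hv1l : v1 ≤ bh1 α.1 := by
          rcases hv1 with ⟨β, hβ, hβv, hmin⟩ | ⟨hno, _⟩
          · exact hmin α.1 h1
          · exact absurd h1 (hno α.1)
        have : bh1 α.1 ≤ v := by
          rw [← hval]
          calc bh1 α.1 = otimes unitA (bh1 α.1) := by rw [hcomm, hunit]
            _ ≤ otimes (bh2 α.2) (bh1 α.1) := hmono _ _ _ (hunitmin _)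
            _ = otimes (bh1 α.1) (bh2 α.2) := hcomm _ _
        exact le_trans (min_le_left _ _) (le_trans hv1l this)
      · have hv2l : v2 ≤ bh2 α.2 := by
          rcases hv2 with ⟨β, hβ, hβv, hmin⟩ | ⟨hno, _⟩
          · exact hmin α.2 h2
          · exact absurd h2 (hno α.2)
        have : bh2 α.2 ≤ v := by
          rw [← hval]
          calc bh2 α.2 = otimes unitA (bh2 α.2) := by rw [hcomm, hunit]
            _ ≤ otimes (bh1 α.1) (bh2 α.2) := hmono _ _ _ (hunitmin _)
        exact le_trans (min_le_right _ _) (le_trans hv2l this)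
    exact le_antisymm (le_min hle1 hle2) hge
  · have h1 : v1 = topA := by
      rcases hv1 with ⟨β, hβ, _⟩ | ⟨_, h⟩
      · exact absurd (Or.inl hβ) (hnone β (fun _ => false))
      · exact h
    have h2 : v2 = topA := by
      rcases hv2 with ⟨β, hβ, _⟩ | ⟨_, h⟩
      · exact absurd (Or.inr hβ) (hnone (fun _ => false) β)
      · exact h
    simp [hvt, h1, h2]
end

section
/- AND-decomposition of optimal attack cost (Lemma 1, AND case): let T be a tree-shaped AADT whose attacker-held root is an AND-gate with two children spanning subtrees T₁ and T₂ with disjoint basic defense step sets D₁, D₂ and disjoint basic attack step sets A₁, A₂. Assume additionally that 1_⊕ is absorbing for ⊗_A (x ⊗_A 1_⊕ = 1_⊕ for all x). Then for δ₁ ∈ 𝔹^{D₁}, δ₂ ∈ 𝔹^{D₂}, β̂_A(ρ(δ₁,δ₂)) = β̂_A(ρ₁(δ₁)) ⊗_A β̂_A(ρ₂(δ₂)). -/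
/-- Lemma 1, AND case: for a tree-shaped AADT whose
attacker-held root is an AND-gate with subtrees `T₁`, `T₂` having disjoint
BDS/BAS sets, and assuming `1_⊕` is absorbing for `⊗_A`, the optimal attack
response value against `(δ₁, δ₂)` satisfies
`β̂_A(ρ(δ₁,δ₂)) = β̂_A(ρ₁(δ₁)) ⊗_A β̂_A(ρ₂(δ₂))`.

Attacks on `T` are pairs `(α₁, α₂)` succeeding iff `α₁` succeeds on `T₁` and
`α₂` succeeds on `T₂`, with `β̂_A(α₁,α₂) = β̂_A(α₁) ⊗_A β̂_A(α₂)`; `ρ(δ)`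
minimizes `β̂_A` over successful attacks, with value `1_⊕` if none exists. -/
theorem and_decomposition
    {VA : Type*} [LinearOrder VA]
    (otimes : VA → VA → VA) (topA unitA : VA)
    (hcomm : ∀ x y, otimes x y = otimes y x)
    (hassoc : ∀ x y z, otimes (otimes x y) z = otimes x (otimes y z))
    (hmono : ∀ x y z, x ≤ y → otimes x z ≤ otimes y z)
    (hunit : ∀ x, otimes x unitA = x)
    (hunitmin : ∀ x, unitA ≤ x)
    (htop : ∀ x, x ≤ topA)
    (habs : ∀ x, otimes x topA = topA)
    {D1 D2 A1 A2 : Type*}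
    (f1 : (D1 → Bool) → (A1 → Bool) → Prop)
    (f2 : (D2 → Bool) → (A2 → Bool) → Prop)
    (bh1 : (A1 → Bool) → VA) (bh2 : (A2 → Bool) → VA)
    (hbh1 : bh1 (fun _ => false) = unitA)
    (hbh2 : bh2 (fun _ => false) = unitA)
    (δ1 : D1 → Bool) (δ2 : D2 → Bool)
    (v1 v2 v : VA)
    -- `v1 = β̂_A(ρ₁(δ₁))`
    (hv1 : (∃ α, f1 δ1 α ∧ bh1 α = v1 ∧ ∀ α', f1 δ1 α' → v1 ≤ bh1 α') ∨
      ((∀ α, ¬ f1 δ1 α) ∧ v1 = topA))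
    -- `v2 = β̂_A(ρ₂(δ₂))`
    (hv2 : (∃ α, f2 δ2 α ∧ bh2 α = v2 ∧ ∀ α', f2 δ2 α' → v2 ≤ bh2 α') ∨
      ((∀ α, ¬ f2 δ2 α) ∧ v2 = topA))
    -- `v = β̂_A(ρ(δ₁,δ₂))`, the root being an AND-gate
    (hv : (∃ α : (A1 → Bool) × (A2 → Bool), (f1 δ1 α.1 ∧ f2 δ2 α.2) ∧
        otimes (bh1 α.1) (bh2 α.2) = v ∧
        ∀ α' : (A1 → Bool) × (A2 → Bool), (f1 δ1 α'.1 ∧ f2 δ2 α'.2) →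
          v ≤ otimes (bh1 α'.1) (bh2 α'.2)) ∨
      ((∀ (α1 : A1 → Bool) (α2 : A2 → Bool), ¬ (f1 δ1 α1 ∧ f2 δ2 α2)) ∧
        v = topA)) :
    v = otimes v1 v2 := by
  rcases hv with ⟨α, ⟨h1, h2⟩, hval, hmin⟩ | ⟨hnone, hvtop⟩
  · rcases hv1 with ⟨a1, ha1, hb1, hm1⟩ | ⟨hn1, _⟩
    · rcases hv2 with ⟨a2, ha2, hb2, hm2⟩ | ⟨hn2, _⟩
      · apply le_antisymm
        · have := hmin (a1, a2) ⟨ha1, ha2⟩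
          simpa [hb1, hb2] using this
        · calc otimes v1 v2 ≤ otimes (bh1 α.1) v2 := hmono _ _ _ (hm1 _ h1)
            _ = otimes v2 (bh1 α.1) := hcomm _ _
            _ ≤ otimes (bh2 α.2) (bh1 α.1) := hmono _ _ _ (hm2 _ h2)
            _ = otimes (bh1 α.1) (bh2 α.2) := hcomm _ _
            _ = v := hval
      · exact absurd h2 (hn2 _)
    · exact absurd h1 (hn1 _)
  · rcases hv1 with ⟨a1, ha1, hb1, hm1⟩ | ⟨hn1, h1top⟩
    · rcases hv2 with ⟨a2, ha2, hb2, hm2⟩ | ⟨hn2, h2top⟩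
      · exact absurd ⟨ha1, ha2⟩ (hnone a1 a2)
      · rw [hvtop, h2top, habs]
    · rw [hvtop, h1top, hcomm, habs]
end
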